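/- arXiv:2603.23792 — 10 statements merged into one kernel-verified Lean document; each statement's English description precedes it below -/
import Mathlib

section
/- Let d ≥ 1 be an integer, R ≥ 0, and σ > 0. Define the minorant q̲(x) := (2πσ²)^{−d/2} · exp( −(‖x‖ + R)² / (2σ²) ) for x ∈ ℝ^d. Then for every y ∈ ℝ^d with ‖y‖ ≤ R, ∫_{ℝ^d} φ_σ(x − y)² / q̲(x) dx ≤ 2^{d/2} · exp( (17/2) · R²/σ² ). -/
/-!
With `c = (2πσ²)^{-d/2}`, the integrand equals `c · exp(((‖x‖ + R)² - 2‖x - y‖²) / (2σ²))`,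
and for `‖y‖ ≤ R` the numerator of the exponent is at most `17R² - ‖x‖²/2`. The integrand is
therefore dominated by `exp(17R²/(2σ²))` times the Gaussian `c · exp(-‖x‖²/(4σ²))`, whose
integral is `c · (4πσ²)^{d/2} = 2^{d/2}`.
-/

open MeasureTheory Real

/-- The Gaussian density on `ℝ^d` with mean `0` and covariance `σ² I_d`. -/
noncomputable def gaussDensity (d : ℕ) (σ : ℝ) (z : EuclideanSpace ℝ (Fin d)) : ℝ :=
  (2 * π * σ ^ 2) ^ (-(d : ℝ) / 2) * Real.exp (-‖z‖ ^ 2 / (2 * σ ^ 2))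

section Gaussian

variable {V : Type*} [NormedAddCommGroup V] [InnerProductSpace ℝ V] [FiniteDimensional ℝ V]
  [MeasurableSpace V] [BorelSpace V]

lemma integral_exp_neg_sq_norm_div {s : ℝ} (hs : 0 < s) :
    ∫ x : V, exp (-‖x‖ ^ 2 / (2 * s)) = (2 * π * s) ^ (Module.finrank ℝ V / 2 : ℝ) := by
  convert GaussianFourier.integral_rexp_neg_mul_sq_norm (V := V) (b := 1 / (2 * s))
    (by positivity) using 3 with x
  · ring_nf
  · field_simp

lemma integrable_exp_neg_sq_norm_div {s : ℝ} (hs : 0 < s) :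
    Integrable fun x : V ↦ exp (-‖x‖ ^ 2 / (2 * s)) :=
  Integrable.of_integral_ne_zero <| by rw [integral_exp_neg_sq_norm_div hs]; positivity

end Gaussian

/-- Equality holds at `‖x‖ = 6R`, `y = (R / ‖x‖) • x`. -/
lemma sq_norm_add_sub_two_mul_sq_norm_sub_le {E : Type*} [NormedAddCommGroup E]
    [InnerProductSpace ℝ E] {x y : E} {R : ℝ} (hy : ‖y‖ ≤ R) :
    (‖x‖ + R) ^ 2 - 2 * ‖x - y‖ ^ 2 ≤ 17 * R ^ 2 - ‖x‖ ^ 2 / 2 := by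
  have hdist : (‖x‖ - ‖y‖) ^ 2 ≤ ‖x - y‖ ^ 2 := by
    simpa only [sq_abs] using pow_le_pow_left₀ (abs_nonneg _) (abs_norm_sub_norm_le x y) 2
  nlinarith [sq_nonneg (‖x‖ - 4 * ‖y‖ - 2 * R), sq_nonneg (R - ‖y‖),
    mul_nonneg (norm_nonneg x) (sub_nonneg.2 hy)]

lemma mul_exp_sq_div_mul_exp {c : ℝ} (hc : c ≠ 0) (a b : ℝ) :
    (c * exp a) ^ 2 / (c * exp b) = c * exp (2 * a - b) := by
  rw [exp_sub, two_mul, exp_add]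
  field_simp

lemma gaussDensity_sq_div_le {d : ℕ} {R σ : ℝ} (hσ : 0 < σ) {x y : EuclideanSpace ℝ (Fin d)}
    (hy : ‖y‖ ≤ R) :
    gaussDensity d σ (x - y) ^ 2 /
        ((2 * π * σ ^ 2) ^ (-(d : ℝ) / 2) * exp (-(‖x‖ + R) ^ 2 / (2 * σ ^ 2))) ≤
      exp (17 / 2 * (R ^ 2 / σ ^ 2)) *
        ((2 * π * σ ^ 2) ^ (-(d : ℝ) / 2) * exp (-‖x‖ ^ 2 / (2 * (2 * σ ^ 2)))) := by
  have hc : 0 < (2 * π * σ ^ 2) ^ (-(d : ℝ) / 2) := by positivity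
  rw [gaussDensity, mul_exp_sq_div_mul_exp hc.ne', mul_left_comm, ← exp_add]
  gcongr
  calc 2 * (-‖x - y‖ ^ 2 / (2 * σ ^ 2)) - -(‖x‖ + R) ^ 2 / (2 * σ ^ 2)
      = ((‖x‖ + R) ^ 2 - 2 * ‖x - y‖ ^ 2) / (2 * σ ^ 2) := by ring
    _ ≤ (17 * R ^ 2 - ‖x‖ ^ 2 / 2) / (2 * σ ^ 2) := by
      gcongr ?_ / _; exact sq_norm_add_sub_two_mul_sq_norm_sub_le hy
    _ = 17 / 2 * (R ^ 2 / σ ^ 2) + -‖x‖ ^ 2 / (2 * (2 * σ ^ 2)) := by ring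

theorem kernel_weighted_L2_bound_general (d : ℕ) (R σ : ℝ)
    (hσ : 0 < σ)
    (qlow : EuclideanSpace ℝ (Fin d) → ℝ)
    (hqlow : ∀ x, qlow x =
      (2 * π * σ ^ 2) ^ (-(d : ℝ) / 2) * Real.exp (-(‖x‖ + R) ^ 2 / (2 * σ ^ 2)))
    (y : EuclideanSpace ℝ (Fin d)) (hy : ‖y‖ ≤ R) :
    ∫ x, gaussDensity d σ (x - y) ^ 2 / qlow x ≤
      (2 : ℝ) ^ ((d : ℝ) / 2) * Real.exp ((17 / 2) * (R ^ 2 / σ ^ 2)) := by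
  obtain rfl : qlow = _ := funext hqlow
  have hs : 0 < 2 * σ ^ 2 := by positivity
  have hnormalize : (2 * π * σ ^ 2) ^ (-(d : ℝ) / 2) * (2 * π * (2 * σ ^ 2)) ^ ((d : ℝ) / 2) =
      2 ^ ((d : ℝ) / 2) := by
    rw [mul_left_comm, mul_rpow zero_le_two (by positivity), neg_div, rpow_neg (by positivity)]
    field_simp
  calc _ ≤ ∫ x : EuclideanSpace ℝ (Fin d), exp (17 / 2 * (R ^ 2 / σ ^ 2)) *
        ((2 * π * σ ^ 2) ^ (-(d : ℝ) / 2) * exp (-‖x‖ ^ 2 / (2 * (2 * σ ^ 2)))) :=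
        integral_mono_of_nonneg (.of_forall fun _ ↦ by positivity)
          (((integrable_exp_neg_sq_norm_div hs).const_mul _).const_mul _)
          (.of_forall fun _ ↦ gaussDensity_sq_div_le hσ hy)
    _ = _ := by
      rw [integral_const_mul, integral_const_mul, integral_exp_neg_sq_norm_div hs,
        finrank_euclideanSpace_fin, hnormalize, mul_comm]

/-- Uniform bound on the weighted `L²` norm of the Gaussian kernel against the
minorant `q̲(x) = (2πσ²)^{−d/2} exp(−(‖x‖+R)²/(2σ²))`. -/
theorem kernel_weighted_L2_bound (d : ℕ) (hd : 1 ≤ d) (R σ : ℝ) (hR : 0 ≤ R)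
    (hσ : 0 < σ)
    (qlow : EuclideanSpace ℝ (Fin d) → ℝ)
    (hqlow : ∀ x, qlow x =
      (2 * π * σ ^ 2) ^ (-(d : ℝ) / 2) * Real.exp (-(‖x‖ + R) ^ 2 / (2 * σ ^ 2)))
    (y : EuclideanSpace ℝ (Fin d)) (hy : ‖y‖ ≤ R) :
    ∫ x, gaussDensity d σ (x - y) ^ 2 / qlow x ≤
      (2 : ℝ) ^ ((d : ℝ) / 2) * Real.exp ((17 / 2) * (R ^ 2 / σ ^ 2)) :=
  kernel_weighted_L2_bound_general d R σ hσ qlow hqlow y hy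
end

section
/- Let E be a real inner product space, let q, y, n ∈ E, and let ζ > 0. Assume the hypomonotonicity (positive-reach) inequality ⟪n, y − q⟫ ≤ (‖n‖ / (2ζ)) · ‖y − q‖². Then, setting x := q + n, one has ‖x − y‖² ≥ ‖n‖² + (1 − ‖n‖/ζ) · ‖y − q‖². -/
open RealInnerProductSpace

/-- Pythagorean-type inequality for metric projections under the
hypomonotonicity (positive reach ≥ ζ) inequality. -/
theorem reach_pythagorean {E : Type*} [NormedAddCommGroup E] [InnerProductSpace ℝ E]
    (q y n : E) (ζ : ℝ) (hζ : 0 < ζ)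
    (hypo : ⟪n, y - q⟫ ≤ (‖n‖ / (2 * ζ)) * ‖y - q‖ ^ 2) :
    ‖(q + n) - y‖ ^ 2 ≥ ‖n‖ ^ 2 + (1 - ‖n‖ / ζ) * ‖y - q‖ ^ 2 := by
  have h : (q + n) - y = n - (y - q) := by abel
  rw [h, norm_sub_sq_real]
  have h2 : (‖n‖ / (2 * ζ)) * ‖y - q‖ ^ 2 = (‖n‖ / ζ) * ‖y - q‖ ^ 2 / 2 := by
    rw [div_mul_eq_div_div_swap]; ring
  nlinarith [hypo]
end

section
/- Let E be a real inner product space, let p, y, n ∈ E, let ζ > 0, and set x := p + n and d := ‖n‖. Assume d < ζ, assume the hypomonotonicity inequality ⟪n, y − p⟫ ≤ (d / (2ζ)) · ‖y − p‖², and assume the near-optimality bound ‖x − y‖ ≤ d + ε′ for some ε′ ≥ 0. Then ‖y − p‖² ≤ ( 2·d·ε′ + ε′² ) / ( 1 − d/ζ ). -/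
open RealInnerProductSpace

/-- Ambient near-optimality implies a chord bound, under the hypomonotonicity
(positive reach ≥ ζ) inequality. -/
theorem chord_bound_of_near_optimality {E : Type*} [NormedAddCommGroup E]
    [InnerProductSpace ℝ E]
    (p y n : E) (ζ ε' : ℝ) (hζ : 0 < ζ) (hε' : 0 ≤ ε')
    (hd : ‖n‖ < ζ)
    (hypo : ⟪n, y - p⟫ ≤ (‖n‖ / (2 * ζ)) * ‖y - p‖ ^ 2)
    (hnear : ‖(p + n) - y‖ ≤ ‖n‖ + ε') :
    ‖y - p‖ ^ 2 ≤ (2 * ‖n‖ * ε' + ε' ^ 2) / (1 - ‖n‖ / ζ) := by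
  have hrw : (p + n) - y = n - (y - p) := by abel
  have hexp : ‖(p + n) - y‖ ^ 2 = ‖n‖ ^ 2 - 2 * ⟪n, y - p⟫ + ‖y - p‖ ^ 2 := by
    rw [hrw, @norm_sub_sq_real]
  have hsq : ‖(p + n) - y‖ ^ 2 ≤ (‖n‖ + ε') ^ 2 := by
    apply sq_le_sq' _ hnear
    have := norm_nonneg ((p + n) - y)
    linarith
  have key : (1 - ‖n‖ / ζ) * ‖y - p‖ ^ 2 ≤ 2 * ‖n‖ * ε' + ε' ^ 2 := by
    have h1 : ‖n‖ ^ 2 - 2 * ((‖n‖ / (2 * ζ)) * ‖y - p‖ ^ 2) + ‖y - p‖ ^ 2 ≤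
        (‖n‖ + ε') ^ 2 := by
      calc ‖n‖ ^ 2 - 2 * ((‖n‖ / (2 * ζ)) * ‖y - p‖ ^ 2) + ‖y - p‖ ^ 2
          ≤ ‖n‖ ^ 2 - 2 * ⟪n, y - p⟫ + ‖y - p‖ ^ 2 := by linarith
        _ = ‖(p + n) - y‖ ^ 2 := hexp.symm
        _ ≤ (‖n‖ + ε') ^ 2 := hsq
    have hζ' : ζ ≠ 0 := ne_of_gt hζ
    have : ‖n‖ / (2 * ζ) = (‖n‖ / ζ) / 2 := by
      rw [mul_comm, ← div_div]
    rw [this] at h1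
    nlinarith
  have hpos : 0 < 1 - ‖n‖ / ζ := by
    rw [sub_pos, div_lt_one hζ]; exact hd
  rw [le_div_iff₀ hpos]
  linarith [key]
end

section
/- Let E be a real inner product space, let M, M̂ ⊆ E be nonempty sets, let ε > 0 and ζ > 0, and let x ∈ E. Let p ∈ M satisfy ‖x − p‖ = infDist(x, M) =: d_M, and let q ∈ M̂ satisfy ‖x − q‖ = infDist(x, M̂) =: d. Assume: (i) there exists y ∈ M̂ with ‖y − p‖ ≤ ε; (ii) infDist(q, M) ≤ ε (so that d_M ≤ d + ε, hence d ≥ d_M − ε); (iii) d_M + ε < ζ; and (iv) the reach-type inequality holds on M̂: for every y′ ∈ M̂, ‖x − y′‖² ≥ d² + (1 − d/ζ) · ‖y′ − q‖². Then ‖p − q‖ ≤ ε + 2 · √( ( d_M · ε + ε² ) / ( 1 − (d_M + ε)/ζ ) ). -/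
open Metric

/-- Hausdorff closeness plus a reach-type inequality on the estimated set
implies closeness of the projections. -/
theorem hausdorff_to_projection {E : Type*} [NormedAddCommGroup E]
    [InnerProductSpace ℝ E]
    (M Mhat : Set E) (hM : M.Nonempty) (hMhat : Mhat.Nonempty)
    (ε ζ : ℝ) (hε : 0 < ε) (hζ : 0 < ζ) (x : E)
    (p : E) (hpM : p ∈ M) (hp : ‖x - p‖ = infDist x M)
    (q : E) (hqMhat : q ∈ Mhat) (hq : ‖x - q‖ = infDist x Mhat)
    (h1 : ∃ y ∈ Mhat, ‖y - p‖ ≤ ε)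
    (h2 : infDist q M ≤ ε)
    (h3 : infDist x M + ε < ζ)
    (h4 : ∀ y' ∈ Mhat,
      ‖x - y'‖ ^ 2 ≥ infDist x Mhat ^ 2 + (1 - infDist x Mhat / ζ) * ‖y' - q‖ ^ 2) :
    ‖p - q‖ ≤ ε +
      2 * Real.sqrt ((infDist x M * ε + ε ^ 2) / (1 - (infDist x M + ε) / ζ)) := by
  obtain ⟨y, hyMhat, hyp⟩ := h1
  set dM := infDist x M with hdM
  set d := infDist x Mhat with hd
  have hdM0 : (0:ℝ) ≤ dM := infDist_nonneg
  have hd0 : (0:ℝ) ≤ d := infDist_nonneg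
  have hxy : ‖x - y‖ ≤ dM + ε := by
    have : ‖x - y‖ ≤ ‖x - p‖ + ‖p - y‖ := norm_sub_le_norm_sub_add_norm_sub x p y
    rw [norm_sub_rev p y] at this
    linarith [hp ▸ this]
  have hdle : d ≤ ‖x - y‖ := by
    rw [hd, ← dist_eq_norm]
    exact infDist_le_dist_of_mem hyMhat
  have hdup : d ≤ dM + ε := hdle.trans hxy
  have hdlo : dM ≤ d + ε := by
    have h := infDist_le_infDist_add_dist (x := x) (y := q) (s := M)
    rw [dist_eq_norm, hq] at h
    linarith
  have hden : 0 < 1 - (dM + ε) / ζ := by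
    have : (dM + ε) / ζ < 1 := (div_lt_one hζ).mpr h3
    linarith
  have hreach := h4 y hyMhat
  have hdiv : d / ζ ≤ (dM + ε) / ζ := by
    exact div_le_div_of_nonneg_right hdup hζ.le |>.trans_eq rfl
  have hnum : (1 - (dM + ε) / ζ) * ‖y - q‖ ^ 2 ≤ 4 * (dM * ε + ε ^ 2) := by
    have hsq : (0:ℝ) ≤ ‖y - q‖ ^ 2 := by positivity
    nlinarith [sq_nonneg (‖x - y‖), hxy, hdle, hdup, hdlo, hd0, hdM0]
  have hA : 0 ≤ (dM * ε + ε ^ 2) / (1 - (dM + ε) / ζ) := by positivity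
  have hsq2 : ‖y - q‖ ^ 2 ≤ (2 * Real.sqrt ((dM * ε + ε ^ 2) / (1 - (dM + ε) / ζ))) ^ 2 := by
    rw [mul_pow, Real.sq_sqrt hA]
    rw [mul_comm, ← le_div_iff₀ hden] at hnum
    calc ‖y - q‖ ^ 2 ≤ 4 * (dM * ε + ε ^ 2) / (1 - (dM + ε) / ζ) := hnum
      _ = 2 ^ 2 * ((dM * ε + ε ^ 2) / (1 - (dM + ε) / ζ)) := by ring
  have hyq : ‖y - q‖ ≤ 2 * Real.sqrt ((dM * ε + ε ^ 2) / (1 - (dM + ε) / ζ)) := by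
    have h := Real.sqrt_le_sqrt hsq2
    rwa [Real.sqrt_sq (norm_nonneg _), Real.sqrt_sq (by positivity)] at h
  have hpq : ‖p - q‖ ≤ ‖p - y‖ + ‖y - q‖ := by
    have : p - q = (p - y) + (y - q) := by abel
    rw [this]; exact norm_add_le _ _
  rw [norm_sub_rev p y] at hpq
  linarith
end

section
/- Let M ⊆ ℝ^D be a nonempty compact connected set, let Y ⊆ M be a nonempty finite subset, and let 0 < ε < r be real numbers such that Y is an ε-net of M: for every x ∈ M there exists y ∈ Y with ‖x − y‖ ≤ ε. Define U := ⋃_{y ∈ Y} B(y, r), the union of the open Euclidean balls of radius r centered at the points of Y. Then: (1) U is a connected set; and (2) U contains the open tubular neighborhood of M of radius r − ε, i.e. { x ∈ ℝ^D : infDist(x, M) < r − ε } ⊆ U. -/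
open Metric

/-- The union of balls of radius `r` centered at an `ε`-net of a nonempty compact
connected set `M` is connected and contains the tubular neighborhood of `M` of
radius `r - ε`. -/
theorem net_ball_union_connected_and_tube {D : ℕ}
    (M : Set (EuclideanSpace ℝ (Fin D))) (hM : M.Nonempty)
    (hMcomp : IsCompact M) (hMconn : IsConnected M)
    (Y : Set (EuclideanSpace ℝ (Fin D))) (hY : Y.Nonempty) (hYM : Y ⊆ M)
    (hYfin : Y.Finite)
    (ε r : ℝ) (hε : 0 < ε) (hεr : ε < r)
    (hnet : ∀ x ∈ M, ∃ y ∈ Y, ‖x - y‖ ≤ ε) :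
    IsConnected (⋃ y ∈ Y, ball y r) ∧
      {x : EuclideanSpace ℝ (Fin D) | infDist x M < r - ε} ⊆ ⋃ y ∈ Y, ball y r := by
  have hr : 0 < r := hε.trans hεr
  have htube : {x : EuclideanSpace ℝ (Fin D) | infDist x M < r - ε} ⊆ ⋃ y ∈ Y, ball y r := by
    intro x hx
    obtain ⟨z, hzM, hz⟩ := (infDist_lt_iff hM).mp hx
    obtain ⟨y, hyY, hy⟩ := hnet z hzM
    refine Set.mem_iUnion₂.mpr ⟨y, hyY, ?_⟩
    have : dist x y ≤ dist x z + dist z y := dist_triangle x z y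
    have hzy : dist z y ≤ ε := by simpa [dist_eq_norm] using hy
    simp only [mem_ball]
    linarith
  have hMU : M ⊆ ⋃ y ∈ Y, ball y r := by
    intro x hxM
    apply htube
    simp [infDist_zero_of_mem hxM]
    linarith
  refine ⟨?_, htube⟩
  have key : (⋃ y ∈ Y, ball y r) = ⋃ y : Y, (ball (y : EuclideanSpace ℝ (Fin D)) r ∪ M) := by
    ext x
    simp only [Set.mem_iUnion, Set.mem_union]
    constructor
    · rintro ⟨y, hy, hx⟩; exact ⟨⟨y, hy⟩, Or.inl hx⟩
    · rintro ⟨⟨y, hy⟩, hx | hx⟩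
      · exact ⟨y, hy, hx⟩
      · obtain ⟨y', hy', hx'⟩ := Set.mem_iUnion₂.mp (hMU hx)
        exact ⟨y', hy', hx'⟩
  rw [key]
  obtain ⟨y0, hy0⟩ := hY
  refine ⟨⟨hM.some, Set.mem_iUnion.mpr ⟨⟨y0, hy0⟩, Or.inr hM.some_mem⟩⟩, ?_⟩
  apply isPreconnected_iUnion
  · exact ⟨hM.some, Set.mem_iInter.mpr fun y => Or.inr hM.some_mem⟩
  · rintro ⟨y, hy⟩
    have hb : IsConnected (ball y r) :=
      ⟨⟨y, mem_ball_self hr⟩, (convex_ball y r).isPreconnected⟩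
    exact (hb.union ⟨y, mem_ball_self hr, hYM hy⟩ hMconn).isPreconnected
end

section
/- Let Y ⊆ ℝ^D be a nonempty finite set, let r > 0, and define the open set U := ⋃_{y ∈ Y} B(y, r). Let η : ℝ^D → ℝ be continuously differentiable, and suppose there exists δ > 0 such that for every x in the topological frontier of U and every y ∈ Y with ‖x − y‖ = r, one has ⟪∇η(x), x − y⟫ ≥ δ · r. Let T > 0 and let x : [0, T] → ℝ^D be a differentiable curve solving the negative gradient flow x′(t) = −∇η(x(t)) for all t ∈ [0, T], with x(0) ∈ U. Then x(t) ∈ U for all t ∈ [0, T] (the trajectory never reaches the boundary of U). -/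
/-!
Let `t₀` be the first time the flow leaves `U`. Then `X t₀` lies on the frontier of `U`, at
distance at least `r` from every centre. For a centre at distance exactly `r`, the barrier makes
the velocity `-∇η (X t₀)` point strictly into its ball, so the distance to that centre was larger
just before `t₀`; for the other centres continuity keeps the trajectory outside their balls.
As `Y` is finite, `X t ∉ U` for all `t` slightly less than `t₀`, contradicting the choice of `t₀`.
-/

open Metric Set Filter Topology
open scoped RealInnerProductSpace

theorem HasDerivAt.eventually_nhdsLT_lt {f : ℝ → ℝ} {f' t₀ : ℝ} (hf : HasDerivAt f f' t₀)
    (hf' : f' < 0) : ∀ᶠ t in 𝓝[<] t₀, f t₀ < f t := by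
  have hslope : ∀ᶠ t in 𝓝[<] t₀, slope f t₀ t < 0 :=
    ((hasDerivAt_iff_tendsto_slope.1 hf).mono_left (nhdsLT_le_nhdsNE t₀)).eventually
      (eventually_lt_nhds hf')
  filter_upwards [hslope, self_mem_nhdsWithin] with t hneg (ht : t < t₀)
  rw [slope_def_field, div_neg_iff] at hneg
  rcases hneg with ⟨hpos, -⟩ | ⟨-, hpos⟩ <;> linarith

section InnerProductSpace

variable {E : Type*} [NormedAddCommGroup E] [InnerProductSpace ℝ E]

theorem HasDerivAt.eventually_nhdsLT_norm_sub_lt {f : ℝ → E} {v y : E} {t₀ : ℝ}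
    (hf : HasDerivAt f v t₀) (hv : ⟪v, f t₀ - y⟫ < 0) :
    ∀ᶠ t in 𝓝[<] t₀, ‖f t₀ - y‖ < ‖f t - y‖ := by
  have hsq : HasDerivAt (‖f · - y‖ ^ 2) (2 * ⟪f t₀ - y, v⟫) t₀ :=
    (hf.sub_const y).norm_sq
  have hneg : 2 * ⟪f t₀ - y, v⟫ < 0 := by rw [real_inner_comm]; linarith
  filter_upwards [hsq.eventually_nhdsLT_lt hneg] with t ht
  exact lt_of_pow_lt_pow_left₀ 2 (norm_nonneg _) ht

theorem HasDerivAt.eventually_nhdsLT_notMem_ball {f : ℝ → E} {v y : E} {t₀ r : ℝ}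
    (hf : HasDerivAt f v t₀) (hr : r ≤ ‖f t₀ - y‖)
    (hv : ‖f t₀ - y‖ = r → ⟪v, f t₀ - y⟫ < 0) :
    ∀ᶠ t in 𝓝[<] t₀, f t ∉ ball y r := by
  simp only [mem_ball, dist_eq_norm, not_lt]
  rcases hr.eq_or_lt with hr | hr
  · filter_upwards [hf.eventually_nhdsLT_norm_sub_lt (hv hr.symm)] with t ht
    exact hr.le.trans ht.le
  · have hcont : Tendsto (‖f · - y‖) (𝓝[<] t₀) (𝓝 ‖f t₀ - y‖) :=
      (hf.continuousAt.sub_const y).norm.mono_left nhdsWithin_le_nhds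
    filter_upwards [hcont.eventually (eventually_gt_nhds hr)] with t ht
    exact ht.le

end InnerProductSpace

theorem exists_first_exit {α : Type*} [TopologicalSpace α] {U : Set α} {X : ℝ → α} {a b : ℝ}
    (hU : IsOpen U) (hX : ContinuousOn X (Icc a b)) (ha : X a ∈ U)
    (hexit : ∃ t ∈ Icc a b, X t ∉ U) :
    ∃ t₀ ∈ Ioc a b, X t₀ ∉ U ∧ Ico a t₀ ⊆ X ⁻¹' U := by
  set S := Icc a b ∩ X ⁻¹' Uᶜ
  have hS : IsClosed S := hX.preimage_isClosed_of_isClosed isClosed_Icc hU.isClosed_compl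
  have hSne : S.Nonempty := hexit
  have hbdd : BddBelow S := ⟨a, fun t ht => ht.1.1⟩
  have hmem : sInf S ∈ S := hS.csInf_mem hSne hbdd
  obtain ⟨⟨ha₀, hb₀⟩, hexit₀⟩ := hmem
  refine ⟨sInf S, ⟨ha₀.lt_of_ne ?_, hb₀⟩, hexit₀, ?_⟩
  · intro h
    exact hexit₀ (h ▸ ha)
  · rintro t ⟨hat, ht⟩
    by_contra hnot
    exact ht.not_ge (csInf_le hbdd ⟨⟨hat, ht.le.trans hb₀⟩, hnot⟩)

theorem gradient_flow_nonescape_general {D : ℕ}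
    (Y : Set (EuclideanSpace ℝ (Fin D))) (hYfin : Y.Finite)
    (r : ℝ) (hr : 0 < r)
    (η : EuclideanSpace ℝ (Fin D) → ℝ)
    (δ : ℝ) (hδ : 0 < δ)
    (hbarrier : ∀ x ∈ frontier (⋃ y ∈ Y, ball y r), ∀ y ∈ Y, ‖x - y‖ = r →
      inner ℝ (gradient η x) (x - y) ≥ δ * r)
    (T : ℝ)
    (X : ℝ → EuclideanSpace ℝ (Fin D))
    (hflow : ∀ t ∈ Icc (0 : ℝ) T, HasDerivAt X (-(gradient η (X t))) t)
    (hX0 : X 0 ∈ ⋃ y ∈ Y, ball y r) :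
    ∀ t ∈ Icc (0 : ℝ) T, X t ∈ ⋃ y ∈ Y, ball y r := by
  set U := ⋃ y ∈ Y, ball y r
  have hU : IsOpen U := isOpen_biUnion fun y _ => isOpen_ball
  by_contra! hescape
  obtain ⟨t₀, ⟨ht₀, ht₀T⟩, hexit, hbefore⟩ := exists_first_exit hU
    (fun t ht => (hflow t ht).continuousAt.continuousWithinAt) hX0 hescape
  have hderiv := hflow t₀ ⟨ht₀.le, ht₀T⟩
  have hinside : ∀ᶠ t in 𝓝[<] t₀, X t ∈ U := mem_of_superset (Ico_mem_nhdsLT ht₀) hbefore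
  have hfrontier : X t₀ ∈ frontier U := by
    refine ⟨mem_closure_of_tendsto ?_ hinside, by rwa [hU.interior_eq]⟩
    exact hderiv.continuousAt.tendsto.mono_left nhdsWithin_le_nhds
  have houtside : ∀ᶠ t in 𝓝[<] t₀, X t ∉ U := by
    simp only [U, mem_iUnion₂, not_exists]
    refine hYfin.eventually_all.2 fun y hy => hderiv.eventually_nhdsLT_notMem_ball ?_ ?_
    · exact not_lt.1 fun h => hexit (mem_biUnion hy (by rwa [mem_ball, dist_eq_norm]))
    · intro hnorm
      have hpush := hbarrier _ hfrontier y hy hnorm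
      rw [inner_neg_left]
      linarith [mul_pos hδ hr]
  obtain ⟨t, hin, hout⟩ := (hinside.and houtside).exists
  exact hout hin

/-- Non-escape: under an outward boundary-barrier condition, the negative gradient
flow started in the union of balls `U` never reaches the boundary of `U`. -/
theorem gradient_flow_nonescape {D : ℕ}
    (Y : Set (EuclideanSpace ℝ (Fin D))) (hY : Y.Nonempty) (hYfin : Y.Finite)
    (r : ℝ) (hr : 0 < r)
    (η : EuclideanSpace ℝ (Fin D) → ℝ) (hη : ContDiff ℝ 1 η)
    (δ : ℝ) (hδ : 0 < δ)
    (hbarrier : ∀ x ∈ frontier (⋃ y ∈ Y, ball y r), ∀ y ∈ Y, ‖x - y‖ = r →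
      inner ℝ (gradient η x) (x - y) ≥ δ * r)
    (T : ℝ) (hT : 0 < T)
    (X : ℝ → EuclideanSpace ℝ (Fin D))
    (hflow : ∀ t ∈ Icc (0 : ℝ) T, HasDerivAt X (-(gradient η (X t))) t)
    (hX0 : X 0 ∈ ⋃ y ∈ Y, ball y r) :
    ∀ t ∈ Icc (0 : ℝ) T, X t ∈ ⋃ y ∈ Y, ball y r :=
  gradient_flow_nonescape_general Y hYfin r hr η δ hδ hbarrier T X hflow hX0
end

section
/- Let U ⊆ ℝ^D be an open set and let ρ : U → ℝ be a continuous nonnegative function that is differentiable at every point z ∈ U with ρ(z) > 0, with gradient of unit norm there: ‖∇ρ(z)‖ = 1 whenever ρ(z) > 0. Let α : [0, 1] → U be a continuously differentiable curve with ρ(α(1)) = 0. Then ρ(α(0)) ≤ ∫₀¹ ‖α′(t)‖ dt, i.e. ρ(α(0)) is at most the Euclidean arc length of α. -/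
open Set intervalIntegral

/-- A continuous nonnegative function with unit gradient (where positive) is bounded
by the arc length of any C¹ curve joining the point to the zero set. -/
theorem eikonal_le_arcLength {D : ℕ}
    (U : Set (EuclideanSpace ℝ (Fin D))) (hU : IsOpen U)
    (ρ : EuclideanSpace ℝ (Fin D) → ℝ)
    (hρcont : ContinuousOn ρ U) (hρnonneg : ∀ z ∈ U, 0 ≤ ρ z)
    (hρdiff : ∀ z ∈ U, 0 < ρ z → DifferentiableAt ℝ ρ z ∧ ‖gradient ρ z‖ = 1)
    (α α' : ℝ → EuclideanSpace ℝ (Fin D))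
    (hαU : ∀ t ∈ Icc (0 : ℝ) 1, α t ∈ U)
    (hα : ∀ t ∈ Icc (0 : ℝ) 1, HasDerivAt α (α' t) t)
    (hα' : Continuous α')
    (hend : ρ (α 1) = 0) :
    ρ (α 0) ≤ ∫ t in (0 : ℝ)..1, ‖α' t‖ := by
  have hαcont : ContinuousOn α (Icc 0 1) :=
    fun t ht => ((hα t ht).continuousAt).continuousWithinAt
  have hgcont : ContinuousOn (fun t => ρ (α t)) (Icc 0 1) :=
    hρcont.comp hαcont (fun t ht => hαU t ht)
  have hint : ∀ a b : ℝ, IntervalIntegrable (fun s => ‖α' s‖) MeasureTheory.volume a b :=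
    fun a b => (hα'.norm).intervalIntegrable a b
  set φ : ℝ → ℝ := fun t => ∫ s in (0:ℝ)..t, ‖α' s‖ with hφdef
  have hφcont : Continuous φ := intervalIntegral.continuous_primitive hint 0
  have hφderiv : ∀ t : ℝ, HasDerivAt φ (‖α' t‖) t := fun t =>
    intervalIntegral.integral_hasDerivAt_right (hint 0 t)
      ((hα'.norm).stronglyMeasurable.stronglyMeasurableAtFilter)
      (hα'.norm.continuousAt)
  by_cases h0 : ρ (α 0) = 0
  · rw [h0]
    exact intervalIntegral.integral_nonneg zero_le_one (fun s _ => norm_nonneg _)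
  set S : Set ℝ := Icc (0:ℝ) 1 ∩ (fun t => ρ (α t)) ⁻¹' {0} with hSdef
  have hSne : S.Nonempty := ⟨1, ⟨zero_le_one, le_refl 1⟩, hend⟩
  have hSbdd : BddBelow S := ⟨0, fun x hx => hx.1.1⟩
  have hSclosed : IsClosed S :=
    hgcont.preimage_isClosed_of_isClosed isClosed_Icc isClosed_singleton
  set T : ℝ := sInf S with hTdef
  have hTS : T ∈ S := hSclosed.csInf_mem hSne hSbdd
  have hT01 : T ∈ Icc (0:ℝ) 1 := hTS.1
  have hgT : ρ (α T) = 0 := hTS.2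
  have hpos : ∀ t, 0 ≤ t → t < T → 0 < ρ (α t) := by
    intro t ht0 htT
    have ht1 : t ∈ Icc (0:ℝ) 1 := ⟨ht0, le_trans htT.le hT01.2⟩
    rcases lt_or_eq_of_le (hρnonneg _ (hαU t ht1)) with h | h
    · exact h
    · exact absurd (csInf_le hSbdd ⟨ht1, h.symm⟩) (not_le.mpr htT)
  set h : ℝ → ℝ := fun t => ρ (α t) + φ t with hhdef
  have hmono : MonotoneOn h (Icc 0 T) := by
    apply monotoneOn_of_deriv_nonneg (convex_Icc 0 T)
    · exact (hgcont.mono (Icc_subset_Icc le_rfl hT01.2)).add hφcont.continuousOn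
    · intro x hx
      rw [interior_Icc] at hx
      have hx1 : x ∈ Icc (0:ℝ) 1 := ⟨hx.1.le, le_trans hx.2.le hT01.2⟩
      obtain ⟨hd, _⟩ := hρdiff (α x) (hαU x hx1) (hpos x hx.1.le hx.2)
      exact ((hd.hasFDerivAt.comp_hasDerivAt x (hα x hx1)).add (hφderiv x)).differentiableAt.differentiableWithinAt
    · intro x hx
      rw [interior_Icc] at hx
      have hx1 : x ∈ Icc (0:ℝ) 1 := ⟨hx.1.le, le_trans hx.2.le hT01.2⟩
      obtain ⟨hd, hn⟩ := hρdiff (α x) (hαU x hx1) (hpos x hx.1.le hx.2)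
      have hD : HasDerivAt h (fderiv ℝ ρ (α x) (α' x) + ‖α' x‖) x :=
        (hd.hasFDerivAt.comp_hasDerivAt x (hα x hx1)).add (hφderiv x)
      rw [hD.deriv]
      have hnf : ‖fderiv ℝ ρ (α x)‖ = 1 := by
        rw [← hn, gradient, LinearIsometryEquiv.norm_map]
      have hb : |fderiv ℝ ρ (α x) (α' x)| ≤ ‖α' x‖ := by
        calc |fderiv ℝ ρ (α x) (α' x)| ≤ ‖fderiv ℝ ρ (α x)‖ * ‖α' x‖ :=
              (fderiv ℝ ρ (α x)).le_opNorm _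
          _ = ‖α' x‖ := by rw [hnf, one_mul]
      linarith [neg_abs_le (fderiv ℝ ρ (α x) (α' x))]
  have hle : h 0 ≤ h T :=
    hmono ⟨le_rfl, hT01.1⟩ ⟨hT01.1, le_rfl⟩ hT01.1
  have hφ0 : φ 0 = 0 := intervalIntegral.integral_same
  have hφT : φ T ≤ φ 1 := by
    have hsplit : φ T + (∫ s in T..(1:ℝ), ‖α' s‖) = φ 1 :=
      intervalIntegral.integral_add_adjacent_intervals (hint 0 T) (hint T 1)
    have hnn : 0 ≤ ∫ s in T..(1:ℝ), ‖α' s‖ :=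
      intervalIntegral.integral_nonneg hT01.2 (fun s _ => norm_nonneg _)
    linarith
  have : ρ (α 0) ≤ φ T := by
    have := hle
    simp only [hhdef, hgT, hφ0, add_zero, zero_add] at this
    exact this
  exact le_trans this hφT
end

section
/- Let t₀ > 0, let T ∈ (0, t₀), let ε ≥ 0, and let b : ℝ → ℝ be a function that is differentiable at every point of [0, T] and satisfies the differential inequality b′(t) ≤ ( ε − b(t) ) / ( 2(t₀ − t) ) for all t ∈ [0, T]. Then b(t) ≤ ε + ( b(0) − ε ) · √( 1 − t/t₀ ) for all t ∈ [0, T]. -/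
/-!
Along a solution of `b' ≤ (ε - b) / (2 (t₀ - t))` the quantity `(b t - ε) / √(t₀ - t)` has derivative
`(b' + (b - ε) / (2 (t₀ - t))) / √(t₀ - t) ≤ 0`, so it is nonincreasing; comparing its values at `t`
and at `0` gives the bound.
-/

open Set

theorem hasDerivAt_sub_div_sqrt_sub {b : ℝ → ℝ} {b' t t₀ : ℝ} (ε : ℝ) (hb : HasDerivAt b b' t)
    (ht : t < t₀) :
    HasDerivAt (fun s => (b s - ε) / √(t₀ - s))
      ((b' + (b t - ε) / (2 * (t₀ - t))) / √(t₀ - t)) t := by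
  have hpos : 0 < t₀ - t := sub_pos.2 ht
  have hsqrt : HasDerivAt (fun s => √(t₀ - s)) (-1 / (2 * √(t₀ - t))) t :=
    ((hasDerivAt_id t).const_sub t₀).sqrt hpos.ne'
  refine ((hb.sub_const ε).div hsqrt (Real.sqrt_pos.2 hpos).ne').congr_deriv ?_
  field_simp
  rw [Real.sq_sqrt hpos.le]
  ring

theorem antitoneOn_sub_div_sqrt_sub {D : Set ℝ} {b : ℝ → ℝ} {t₀ : ℝ} (ε : ℝ) (hD : Convex ℝ D)
    (hlt : ∀ t ∈ D, t < t₀) (hdiff : ∀ t ∈ D, DifferentiableAt ℝ b t)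
    (hineq : ∀ t ∈ D, deriv b t ≤ (ε - b t) / (2 * (t₀ - t))) :
    AntitoneOn (fun s => (b s - ε) / √(t₀ - s)) D := by
  have hderiv : ∀ t ∈ D, HasDerivAt (fun s => (b s - ε) / √(t₀ - s))
      ((deriv b t + (b t - ε) / (2 * (t₀ - t))) / √(t₀ - t)) t := fun t ht =>
    hasDerivAt_sub_div_sqrt_sub ε (hdiff t ht).hasDerivAt (hlt t ht)
  refine antitoneOn_of_deriv_nonpos hD
    (fun t ht => (hderiv t ht).continuousAt.continuousWithinAt)
    (fun t ht => (hderiv t (interior_subset ht)).differentiableAt.differentiableWithinAt)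
    fun t ht => ?_
  have ht' := interior_subset ht
  rw [(hderiv t ht').deriv]
  refine div_nonpos_of_nonpos_of_nonneg ?_ (Real.sqrt_nonneg _)
  have hbt := hineq t ht'
  rw [← neg_sub (b t) ε, neg_div] at hbt
  linarith

theorem contraction_comparison_general (t₀ T ε : ℝ) (hT : T < t₀) (b : ℝ → ℝ)
    (hdiff : ∀ t ∈ Icc (0 : ℝ) T, DifferentiableAt ℝ b t)
    (hineq : ∀ t ∈ Icc (0 : ℝ) T, deriv b t ≤ (ε - b t) / (2 * (t₀ - t))) :
    ∀ t ∈ Icc (0 : ℝ) T, b t ≤ ε + (b 0 - ε) * Real.sqrt (1 - t / t₀) := by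
  intro t ht
  have hlt : ∀ s ∈ Icc (0 : ℝ) T, s < t₀ := fun s hs => hs.2.trans_lt hT
  have ht₀ : 0 < t₀ := ht.1.trans_lt (hlt t ht)
  have hmono : (b t - ε) / √(t₀ - t) ≤ (b 0 - ε) / √(t₀ - 0) :=
    antitoneOn_sub_div_sqrt_sub ε (convex_Icc 0 T) hlt hdiff hineq
      ⟨le_rfl, ht.1.trans ht.2⟩ ht ht.1
  have hsqrt : √(1 - t / t₀) = √(t₀ - t) / √t₀ := by
    rw [one_sub_div ht₀.ne', Real.sqrt_div (sub_pos.2 (hlt t ht)).le]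
  rw [sub_zero, div_le_iff₀ (Real.sqrt_pos.2 (sub_pos.2 (hlt t ht)))] at hmono
  rw [hsqrt, ← mul_comm_div]
  linarith

/-- One-dimensional comparison lemma for the normal contraction estimate:
if `b′(t) ≤ (ε − b(t)) / (2(t₀ − t))` on `[0, T]`, then
`b(t) ≤ ε + (b(0) − ε)·√(1 − t/t₀)`. -/
theorem contraction_comparison (t₀ T ε : ℝ) (ht₀ : 0 < t₀) (hT0 : 0 < T) (hT : T < t₀)
    (hε : 0 ≤ ε) (b : ℝ → ℝ)
    (hdiff : ∀ t ∈ Icc (0 : ℝ) T, DifferentiableAt ℝ b t)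
    (hineq : ∀ t ∈ Icc (0 : ℝ) T, deriv b t ≤ (ε - b t) / (2 * (t₀ - t))) :
    ∀ t ∈ Icc (0 : ℝ) T, b t ≤ ε + (b 0 - ε) * Real.sqrt (1 - t / t₀) :=
  contraction_comparison_general t₀ T ε hT b hdiff hineq
end

section
/- Let M ⊆ ℝ^D be a nonempty closed set, let t₀ > 0, τ ∈ (0, t₀), and ε ≥ 0. Let X : ℝ → ℝ^D be differentiable at every point of [0, t₀ − τ], let π : ℝ^D → ℝ^D be a map such that for every t ∈ [0, t₀ − τ] the point π(X(t)) is a nearest point of X(t) in M, i.e. π(X(t)) ∈ M and ‖X(t) − π(X(t))‖ = infDist(X(t), M), and let e : ℝ → ℝ^D satisfy ‖e(t)‖ ≤ ε for all t ∈ [0, t₀ − τ]. Suppose X solves the terminal-time probability-flow ODE: X′(t) = ( −( X(t) − π(X(t)) ) + e(t) ) / ( 2(t₀ − t) ) for all t ∈ [0, t₀ − τ]. Then infDist( X(t₀ − τ), M ) ≤ √2 · ε + infDist( X(0), M ) · √( τ / t₀ ). -/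
/-!
Write `d t = infDist (X t) M`. Fix `t` and the nearest point `p = π (X t)`: the function
`‖X z - p‖` dominates `d` and agrees with it at `z = t`, and along the flow it decreases at rate
`‖X t - p‖ / (2 (t₀ - t))` up to the error term of speed at most `ε / (2 (t₀ - t))`. Hence the upper
right Dini derivative of `d` is at most `(ε - d t) / (2 (t₀ - t))`, and comparison with the solution
`ε + (d 0 - ε) √((t₀ - t) / t₀)` of the corresponding linear ODE gives
`d (t₀ - τ) ≤ ε + (d 0 - ε) √(τ / t₀)`, which is sharper than the claim.
-/

open Set Metric Filter Topology

section
variable {E : Type*} [NormedAddCommGroup E] [NormedSpace ℝ E]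

theorem eventually_slope_norm_sub_lt {Y : ℝ → E} {t a r : ℝ} {p w : E}
    (hY : HasDerivWithinAt Y (a • (p - Y t) + w) (Ioi t) t)
    (hr : ‖w‖ - a * ‖Y t - p‖ < r) :
    ∀ᶠ z in 𝓝[>] t, slope (fun z => ‖Y z - p‖) t z < r := by
  set Y' := a • (p - Y t) + w
  have hlim : Tendsto (fun z => ‖w‖ - a * ‖Y t - p‖ + ‖slope Y t z - Y'‖) (𝓝[>] t)
      (𝓝 (‖w‖ - a * ‖Y t - p‖)) := by
    have := tendsto_iff_norm_sub_tendsto_zero.1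
      ((hasDerivWithinAt_iff_tendsto_slope' self_notMem_Ioi).1 hY)
    simpa using this.const_add (‖w‖ - a * ‖Y t - p‖)
  have hsmall : ∀ᶠ z in 𝓝[>] t, a * (z - t) ≤ 1 := by
    have : Tendsto (fun z => a * (z - t)) (𝓝 t) (𝓝 0) :=
      (by fun_prop : Continuous fun z => a * (z - t)).tendsto' t 0 (by simp)
    exact nhdsWithin_le_nhds (this.eventually_le_const zero_lt_one)
  filter_upwards [hlim.eventually_lt_const hr, hsmall, self_mem_nhdsWithin]
    with z hz hza (hzt : t < z)
  have hh : 0 < z - t := sub_pos.2 hzt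
  -- first-order expansion of `Y` at `t`; the drift contracts `Y t - p` by `1 - (z - t) a`
  have hexp : Y z - p = (1 - (z - t) * a) • (Y t - p) + (z - t) • w
      + (z - t) • (slope Y t z - Y') := by
    rw [slope_def_module, smul_sub (z - t), smul_inv_smul₀ hh.ne']
    simp only [Y', smul_add, smul_sub, sub_smul, one_smul, smul_smul]
    abel
  have hnorm : ‖Y z - p‖ ≤ (1 - (z - t) * a) * ‖Y t - p‖ + (z - t) * ‖w‖
      + (z - t) * ‖slope Y t z - Y'‖ := by
    rw [hexp]
    refine (norm_add₃_le).trans ?_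
    rw [norm_smul, norm_smul, norm_smul, Real.norm_of_nonneg (by linarith),
      Real.norm_of_nonneg hh.le]
  rw [slope_def_field, div_lt_iff₀ hh]
  nlinarith

theorem eventually_slope_infDist_lt {M : Set E} {Y : ℝ → E} {t a r : ℝ} {p w : E}
    (hp : p ∈ M) (hpY : ‖Y t - p‖ = infDist (Y t) M)
    (hY : HasDerivWithinAt Y (a • (p - Y t) + w) (Ioi t) t)
    (hr : ‖w‖ - a * infDist (Y t) M < r) :
    ∀ᶠ z in 𝓝[>] t, slope (fun z => infDist (Y z) M) t z < r := by
  filter_upwards [eventually_slope_norm_sub_lt hY (hpY ▸ hr), self_mem_nhdsWithin]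
    with z hz (hzt : t < z)
  refine lt_of_le_of_lt ?_ hz
  rw [slope_def_field, slope_def_field, hpY]
  gcongr
  simpa [dist_eq_norm] using infDist_le_dist_of_mem hp (x := Y z)

end

theorem le_sqrt_decay_of_liminf_slope_right_le {f : ℝ → ℝ} {a b t₀ ε : ℝ} (hab : a ≤ b)
    (hbt₀ : b < t₀) (hf : ContinuousOn f (Icc a b))
    (hslope : ∀ t ∈ Ico a b, ∀ r, (2 * (t₀ - t))⁻¹ * (ε - f t) < r →
      ∃ᶠ z in 𝓝[>] t, slope f t z < r) :
    f b ≤ ε + (f a - ε) * √((t₀ - b) / (t₀ - a)) := by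
  have hpos : ∀ t ∈ Icc a b, 0 < t₀ - t := fun t ht => sub_pos.2 (ht.2.trans_lt hbt₀)
  set K := (f a - ε) / √(t₀ - a)
  have hK : K * √(t₀ - a) = f a - ε :=
    div_mul_cancel₀ _ (Real.sqrt_pos.2 (hpos a (left_mem_Icc.2 hab))).ne'
  -- `ε + K √(t₀ - t)` solves `B' = (ε - B) / (2 (t₀ - t))`; adding `r > 0` makes it a strict
  -- supersolution
  suffices h : ∀ r > 0, f b ≤ ε + r + K * √(t₀ - b) by
    rw [Real.sqrt_div' _ (hpos a (left_mem_Icc.2 hab)).le, ← mul_div_assoc, ← div_mul_eq_mul_div]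
    exact le_of_forall_pos_le_add fun r hr => by linarith [h r hr]
  intro r hr
  refine image_le_of_liminf_slope_right_lt_deriv_boundary' (B := fun t => ε + r + K * √(t₀ - t))
    (B' := fun t => -K / (2 * √(t₀ - t))) hf hslope (by simp only [hK]; linarith) (by fun_prop)
    ?_ ?_ (right_mem_Icc.2 hab)
  · intro t ht
    have h := ((Real.hasDerivAt_sqrt (hpos t (Ico_subset_Icc_self ht)).ne').comp t
      ((hasDerivAt_id t).const_sub t₀)).const_mul K
    exact ((h.const_add (ε + r)).congr_deriv (by ring)).hasDerivWithinAt
  · intro t ht hfB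
    have hs := hpos t (Ico_subset_Icc_self ht)
    have hsq := Real.mul_self_sqrt hs.le
    have hsp := Real.sqrt_pos.2 hs
    rw [hfB]
    field_simp
    nlinarith [mul_pos hr hsp, congrArg (K * ·) hsq]

theorem contract_to_eps_tube_general {D : ℕ}
    (M : Set (EuclideanSpace ℝ (Fin D)))
    (t₀ τ ε : ℝ) (hτ : τ ∈ Ioo (0 : ℝ) t₀) (hε : 0 ≤ ε)
    (X : ℝ → EuclideanSpace ℝ (Fin D))
    (π : EuclideanSpace ℝ (Fin D) → EuclideanSpace ℝ (Fin D))
    (hπ : ∀ t ∈ Icc (0 : ℝ) (t₀ - τ),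
      π (X t) ∈ M ∧ ‖X t - π (X t)‖ = infDist (X t) M)
    (e : ℝ → EuclideanSpace ℝ (Fin D))
    (he : ∀ t ∈ Icc (0 : ℝ) (t₀ - τ), ‖e t‖ ≤ ε)
    (hflow : ∀ t ∈ Icc (0 : ℝ) (t₀ - τ),
      HasDerivAt X ((2 * (t₀ - t))⁻¹ • (-(X t - π (X t)) + e t)) t) :
    infDist (X (t₀ - τ)) M ≤ Real.sqrt 2 * ε + infDist (X 0) M * Real.sqrt (τ / t₀) := by
  have hcont : ContinuousOn (fun t => infDist (X t) M) (Icc 0 (t₀ - τ)) := fun t ht =>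
    ((continuous_infDist_pt M).continuousAt.comp (hflow t ht).continuousAt).continuousWithinAt
  have hslope : ∀ t ∈ Ico 0 (t₀ - τ), ∀ r, (2 * (t₀ - t))⁻¹ * (ε - infDist (X t) M) < r →
      ∃ᶠ z in 𝓝[>] t, slope (fun t => infDist (X t) M) t z < r := by
    intro t ht r hr
    have htI := Ico_subset_Icc_self ht
    have ha : 0 ≤ (2 * (t₀ - t))⁻¹ := inv_nonneg.2 (by linarith [ht.2, hτ.1])
    obtain ⟨hpM, hpX⟩ := hπ t htI
    refine (eventually_slope_infDist_lt (a := (2 * (t₀ - t))⁻¹)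
      (w := (2 * (t₀ - t))⁻¹ • e t) hpM hpX ?_ ?_).frequently
    · simpa only [smul_add, smul_neg, neg_sub] using (hflow t htI).hasDerivWithinAt
    · rw [norm_smul, Real.norm_of_nonneg ha]
      nlinarith [mul_le_mul_of_nonneg_left (he t htI) ha]
  have hdecay := le_sqrt_decay_of_liminf_slope_right_le (by linarith [hτ.2]) (by linarith [hτ.1])
    hcont hslope
  rw [sub_sub_cancel, sub_zero] at hdecay
  nlinarith [Real.one_lt_sqrt_two, mul_nonneg hε (Real.sqrt_nonneg (τ / t₀))]

/-- Contraction to an ε-tube: the terminal-time probability-flow ODE driven by an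
ε-accurate projection score drives the trajectory into an `O(ε)`-neighborhood of `M`. -/
theorem contract_to_eps_tube {D : ℕ}
    (M : Set (EuclideanSpace ℝ (Fin D))) (hM : M.Nonempty) (hMcl : IsClosed M)
    (t₀ τ ε : ℝ) (ht₀ : 0 < t₀) (hτ : τ ∈ Ioo (0 : ℝ) t₀) (hε : 0 ≤ ε)
    (X : ℝ → EuclideanSpace ℝ (Fin D))
    (π : EuclideanSpace ℝ (Fin D) → EuclideanSpace ℝ (Fin D))
    (hπ : ∀ t ∈ Icc (0 : ℝ) (t₀ - τ),
      π (X t) ∈ M ∧ ‖X t - π (X t)‖ = infDist (X t) M)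
    (e : ℝ → EuclideanSpace ℝ (Fin D))
    (he : ∀ t ∈ Icc (0 : ℝ) (t₀ - τ), ‖e t‖ ≤ ε)
    (hflow : ∀ t ∈ Icc (0 : ℝ) (t₀ - τ),
      HasDerivAt X ((2 * (t₀ - t))⁻¹ • (-(X t - π (X t)) + e t)) t) :
    infDist (X (t₀ - τ)) M ≤ Real.sqrt 2 * ε + infDist (X 0) M * Real.sqrt (τ / t₀) :=
  contract_to_eps_tube_general M t₀ τ ε hτ hε X π hπ e he hflow
end

section
/- Let M ⊆ ℝ^D be a nonempty closed set, let t₀ > 0, τ ∈ (0, t₀), and ε ≥ 0. Let X : ℝ → ℝ^D be differentiable at every point of [0, t₀ − τ], let π : ℝ^D → ℝ^D be a map such that for every t ∈ [0, t₀ − τ] the point π(X(t)) is a nearest point of X(t) in M, i.e. π(X(t)) ∈ M and ‖X(t) − π(X(t))‖ = infDist(X(t), M), and let e : ℝ → ℝ^D satisfy ‖e(t)‖ ≤ ε for all t ∈ [0, t₀ − τ]. Suppose X solves X′(t) = ( −( X(t) − π(X(t)) ) + e(t) ) / ( 2(t₀ − t) ) for all t ∈ [0, t₀ − τ], and suppose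 additionally that infDist( X(0), M ) ≥ √2 · ε. Then the total displacement of the trajectory satisfies ‖ X(t₀ − τ) − X(0) ‖ ≤ infDist( X(0), M ) + ( (1 + √2)/2 ) · ε · log( t₀ / τ ). -/
/-!
Write `d t = infDist (X t) M`. Since `d ≤ ‖X · - π (X t)‖` with equality at `t`, the flow equation
bounds the lower right Dini derivative of `d` by `(ε - d t) / (2 (t₀ - t))`, and comparison with
the exact solution `ε + c √(t₀ - t)` of that scalar equation, `c = d 0 / √t₀`, gives the in-flight
estimate `d t ≤ ε + d 0 √((t₀ - t) / t₀)`. Hence the speed is at most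
`ε / (t₀ - t) + c / (2 √(t₀ - t))`, whose integral over `[0, t₀ - τ]` is
`ε log (t₀ / τ) + c (√t₀ - √τ) ≤ ε log (t₀ / τ) + d 0`.
-/

open Set Metric Filter Topology
open scoped RealInnerProductSpace

/-- `liminf_{z → x⁺} slope f x z ≤ c`, in the form taken by
`image_le_of_liminf_slope_right_lt_deriv_boundary'`. -/
def LowerRightDiniLE (f : ℝ → ℝ) (x c : ℝ) : Prop :=
  ∀ r, c < r → ∃ᶠ z in 𝓝[>] x, slope f x z < r

namespace LowerRightDiniLE

variable {f g : ℝ → ℝ} {x c c' : ℝ}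

theorem mono (h : LowerRightDiniLE f x c) (hc : c ≤ c') : LowerRightDiniLE f x c' :=
  fun r hr => h r (hc.trans_lt hr)

theorem of_le (h : LowerRightDiniLE g x c) (hfg : ∀ z, f z ≤ g z) (hx : f x = g x) :
    LowerRightDiniLE f x c := fun r hr =>
  (h r hr).mp <| eventually_nhdsWithin_of_forall fun z (hz : x < z) hgz =>
    calc slope f x z = (f z - g x) / (z - x) := by rw [slope_def_field, hx]
      _ ≤ slope g x z := by
        rw [slope_def_field]; exact div_le_div_of_nonneg_right (by linarith [hfg z]) (by linarith)
      _ < r := hgz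

end LowerRightDiniLE

theorem HasDerivAt.lowerRightDiniLE {f : ℝ → ℝ} {f' x : ℝ} (hf : HasDerivAt f f' x) :
    LowerRightDiniLE f x f' := fun _ hr =>
  (((hasDerivAt_iff_tendsto_slope.1 hf).mono_left
    (nhdsWithin_mono x fun _ (hz : _ ∈ Ioi x) => hz.ne')).eventually_lt_const hr).frequently

theorem HasDerivAt.lowerRightDiniLE_norm {E : Type*} [NormedAddCommGroup E] [NormedSpace ℝ E]
    {Y : ℝ → E} {W : E} {x : ℝ} (hY : HasDerivAt Y W x) :
    LowerRightDiniLE (fun t => ‖Y t‖) x ‖W‖ := fun _ hr =>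
  (hY.hasDerivWithinAt.liminf_right_slope_norm_le hr).mono fun _ hz => by
    rwa [slope_def_field, div_eq_inv_mul]

section InnerProductSpace

variable {E : Type*} [NormedAddCommGroup E] [InnerProductSpace ℝ E] {Y : ℝ → E} {W : E} {x : ℝ}

theorem HasDerivAt.norm (hY : HasDerivAt Y W x) (h0 : Y x ≠ 0) :
    HasDerivAt (fun t => ‖Y t‖) (⟪Y x, W⟫ / ‖Y x‖) x := by
  have hpos : 0 < ‖Y x‖ := norm_pos_iff.2 h0
  convert hY.norm_sq.sqrt (by positivity) using 1
  · simp only [Real.sqrt_sq (norm_nonneg _)]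
  · rw [Real.sqrt_sq hpos.le, mul_div_mul_left _ _ two_ne_zero]

theorem lowerRightDiniLE_norm_of_hasDerivAt_smul_neg_add {a : ℝ} {w : E} (ha : 0 ≤ a)
    (hY : HasDerivAt Y (a • (-Y x + w)) x) :
    LowerRightDiniLE (fun t => ‖Y t‖) x (a * (‖w‖ - ‖Y x‖)) := by
  rcases eq_or_ne (Y x) 0 with h0 | h0
  · refine hY.lowerRightDiniLE_norm.mono ?_
    rw [h0, neg_zero, zero_add, norm_smul, Real.norm_of_nonneg ha, norm_zero, sub_zero]
  · refine (hY.norm h0).lowerRightDiniLE.mono ?_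
    have hpos : 0 < ‖Y x‖ := norm_pos_iff.2 h0
    rw [real_inner_smul_right, inner_add_right, inner_neg_right, real_inner_self_eq_norm_sq,
      div_le_iff₀ hpos]
    nlinarith [real_inner_le_norm (Y x) w]

theorem lowerRightDiniLE_infDist_of_hasDerivAt {M : Set E} {X : ℝ → E} {p w : E} {a : ℝ}
    (ha : 0 ≤ a) (hp : p ∈ M) (hpx : ‖X x - p‖ = infDist (X x) M)
    (hX : HasDerivAt X (a • (-(X x - p) + w)) x) :
    LowerRightDiniLE (fun t => infDist (X t) M) x (a * (‖w‖ - infDist (X x) M)) := by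
  have h := lowerRightDiniLE_norm_of_hasDerivAt_smul_neg_add (Y := fun t => X t - p) ha
    (hX.sub_const p)
  rw [hpx] at h
  exact h.of_le (fun z => by rw [← dist_eq_norm]; exact infDist_le_dist_of_mem hp) hpx.symm

end InnerProductSpace

theorem le_of_lowerRightDiniLE_of_antitone {f B B' : ℝ → ℝ} {φ : ℝ → ℝ → ℝ} {a b : ℝ}
    (hf : ContinuousOn f (Icc a b)) (hf' : ∀ x ∈ Ico a b, LowerRightDiniLE f x (φ x (f x)))
    (hφ : ∀ x ∈ Ico a b, Antitone (φ x)) (hB : ContinuousOn B (Icc a b))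
    (hB' : ∀ x ∈ Ico a b, HasDerivWithinAt B (B' x) (Ici x) x)
    (hsuper : ∀ x ∈ Ico a b, φ x (B x) ≤ B' x) (ha : f a ≤ B a) :
    ∀ x ∈ Icc a b, f x ≤ B x := by
  intro x hx
  -- `B + δ (· - a)` is a strict supersolution, so the strict comparison theorem applies to it
  have hδ : ∀ δ > 0, f x ≤ B x + δ * (x - a) := fun δ hδ =>
    image_le_of_liminf_slope_right_lt_deriv_boundary' (f' := fun y => φ y (f y))
      (B := fun y => B y + δ * (y - a)) (B' := fun y => B' y + δ) hf hf' (by simpa using ha)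
      (hB.add (continuousOn_const.mul (continuousOn_id.sub continuousOn_const)))
      (fun y hy => (hB' y hy).add
        ((((hasDerivWithinAt_id y _).sub_const a).const_mul δ).congr_deriv (mul_one δ)))
      (fun y hy hfy => calc
        φ y (f y) ≤ φ y (B y) := hφ y hy (by rw [hfy]; nlinarith [hy.1])
        _ ≤ B' y := hsuper y hy
        _ < B' y + δ := lt_add_of_pos_right _ hδ) hx
  have hlim : Tendsto (fun δ => B x + δ * (x - a)) (𝓝[>] 0) (𝓝 (B x)) :=
    tendsto_nhdsWithin_of_tendsto_nhds <|
      (by fun_prop : Continuous fun δ : ℝ => B x + δ * (x - a)).tendsto' 0 _ (by simp)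
  exact ge_of_tendsto hlim (eventually_nhdsWithin_of_forall hδ)

theorem norm_sub_le_sub_of_norm_deriv_le {E : Type*} [NormedAddCommGroup E] [NormedSpace ℝ E]
    {X X' : ℝ → E} {B B' : ℝ → ℝ} {a b : ℝ} (hab : a ≤ b)
    (hX : ∀ x ∈ Icc a b, HasDerivAt X (X' x) x) (hB : ∀ x ∈ Icc a b, HasDerivAt B (B' x) x)
    (hbound : ∀ x ∈ Ico a b, ‖X' x‖ ≤ B' x) : ‖X b - X a‖ ≤ B b - B a :=
  image_norm_le_of_norm_deriv_right_le_deriv_boundary' (f := fun t => X t - X a)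
    (B := fun t => B t - B a)
    (fun x hx => ((hX x hx).sub_const _).continuousAt.continuousWithinAt)
    (fun x hx => ((hX x (Ico_subset_Icc_self hx)).sub_const _).hasDerivWithinAt)
    (by simp) (fun x hx => ((hB x hx).sub_const _).continuousAt.continuousWithinAt)
    (fun x hx => ((hB x (Ico_subset_Icc_self hx)).sub_const _).hasDerivWithinAt) hbound
    ⟨hab, le_rfl⟩

theorem hasDerivAt_sqrt_const_sub {t₀ x : ℝ} (hx : x < t₀) :
    HasDerivAt (fun s => √(t₀ - s)) (-1 / (2 * √(t₀ - x))) x :=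
  ((hasDerivAt_id x).const_sub t₀).sqrt (sub_pos.2 hx).ne'

section Flow

variable {E : Type*} [NormedAddCommGroup E] [InnerProductSpace ℝ E]

/-- The probability-flow ODE driven by the learned score `(-(x - π x) + e) / t`, run in forward
time up to `T`. -/
structure IsLearnedScoreFlow (M : Set E) (π : E → E) (e : ℝ → E) (ε t₀ T : ℝ) (X : ℝ → E) :
    Prop where
  nearest : ∀ t ∈ Icc 0 T, π (X t) ∈ M ∧ ‖X t - π (X t)‖ = infDist (X t) M
  error : ∀ t ∈ Icc 0 T, ‖e t‖ ≤ ε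
  hasDerivAt : ∀ t ∈ Icc 0 T, HasDerivAt X ((2 * (t₀ - t))⁻¹ • (-(X t - π (X t)) + e t)) t

namespace IsLearnedScoreFlow

variable {M : Set E} {π : E → E} {e X : ℝ → E} {ε t₀ T : ℝ}

theorem lowerRightDiniLE_infDist (hX : IsLearnedScoreFlow M π e ε t₀ T X) (hT : T < t₀)
    {x : ℝ} (hx : x ∈ Icc 0 T) :
    LowerRightDiniLE (fun t => infDist (X t) M) x
      ((2 * (t₀ - x))⁻¹ * (ε - infDist (X x) M)) := by
  have ha : 0 ≤ (2 * (t₀ - x))⁻¹ := inv_nonneg.2 (by linarith [hx.2])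
  obtain ⟨hp, hpx⟩ := hX.nearest x hx
  exact (lowerRightDiniLE_infDist_of_hasDerivAt ha hp hpx (hX.hasDerivAt x hx)).mono
    (mul_le_mul_of_nonneg_left (by linarith [hX.error x hx]) ha)

theorem norm_deriv_le (hX : IsLearnedScoreFlow M π e ε t₀ T X) (hT : T < t₀) {x : ℝ}
    (hx : x ∈ Icc 0 T) :
    ‖(2 * (t₀ - x))⁻¹ • (-(X x - π (X x)) + e x)‖ ≤ (2 * (t₀ - x))⁻¹ * (infDist (X x) M + ε) := by
  have ha : 0 ≤ (2 * (t₀ - x))⁻¹ := inv_nonneg.2 (by linarith [hx.2])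
  rw [norm_smul, Real.norm_of_nonneg ha, ← (hX.nearest x hx).2, ← norm_neg (X x - π (X x))]
  exact mul_le_mul_of_nonneg_left ((norm_add_le _ _).trans (by linarith [hX.error x hx])) ha

theorem infDist_le (hX : IsLearnedScoreFlow M π e ε t₀ T X) (hT : T < t₀) (hε : 0 ≤ ε) :
    ∀ t ∈ Icc 0 T, infDist (X t) M ≤ ε + infDist (X 0) M / √t₀ * √(t₀ - t) := by
  intro t ht
  have ht₀ : 0 < t₀ := by linarith [ht.1, ht.2]
  set c := infDist (X 0) M / √t₀
  have hB : ∀ x ∈ Icc 0 T,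
      HasDerivAt (fun s => ε + c * √(t₀ - s)) (c * (-1 / (2 * √(t₀ - x)))) x := fun x hx =>
    ((hasDerivAt_sqrt_const_sub (by linarith [hx.2])).const_mul c).const_add ε
  -- `ε + c √(t₀ - t)` solves the scalar equation `y' = (ε - y) / (2 (t₀ - t))` exactly
  have hsolve : ∀ s > 0, (2 * s ^ 2)⁻¹ * (ε - (ε + c * s)) = c * (-1 / (2 * s)) := by
    intro s hs; field_simp; ring
  refine le_of_lowerRightDiniLE_of_antitone (φ := fun x y => (2 * (t₀ - x))⁻¹ * (ε - y))
    ((continuous_infDist_pt M).comp_continuousOn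
      fun x hx => (hX.hasDerivAt x hx).continuousAt.continuousWithinAt)
    (fun x hx => hX.lowerRightDiniLE_infDist hT (Ico_subset_Icc_self hx))
    (fun x hx y z hyz => mul_le_mul_of_nonneg_left (by linarith)
      (inv_nonneg.2 (by linarith [hx.2])))
    (fun x hx => (hB x hx).continuousAt.continuousWithinAt)
    (fun x hx => (hB x (Ico_subset_Icc_self hx)).hasDerivWithinAt) (fun x hx => ?_) ?_ t ht
  · have hx0 : 0 < t₀ - x := by linarith [hx.2]
    refine le_of_eq ?_
    calc (2 * (t₀ - x))⁻¹ * (ε - (ε + c * √(t₀ - x)))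
        = (2 * √(t₀ - x) ^ 2)⁻¹ * (ε - (ε + c * √(t₀ - x))) := by rw [Real.sq_sqrt hx0.le]
      _ = _ := hsolve _ (Real.sqrt_pos.2 hx0)
  · show infDist (X 0) M ≤ ε + c * √(t₀ - 0)
    rw [sub_zero, div_mul_cancel₀ _ (Real.sqrt_pos.2 ht₀).ne']
    linarith

theorem norm_sub_le (hX : IsLearnedScoreFlow M π e ε t₀ T X) (hT₀ : 0 ≤ T) (hT : T < t₀)
    (hε : 0 ≤ ε) :
    ‖X T - X 0‖ ≤ ε * (Real.log t₀ - Real.log (t₀ - T))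
      + infDist (X 0) M / √t₀ * (√t₀ - √(t₀ - T)) := by
  set c := infDist (X 0) M / √t₀
  have hB : ∀ x ∈ Icc 0 T, HasDerivAt (fun s => -(ε * Real.log (t₀ - s)) - c * √(t₀ - s))
      (ε / (t₀ - x) + c * (1 / (2 * √(t₀ - x)))) x := by
    intro x hx
    have hx0 : 0 < t₀ - x := by linarith [hx.2]
    have h : HasDerivAt (fun s => -(ε * Real.log (t₀ - s)) - c * √(t₀ - s))
        (-(ε * (-1 / (t₀ - x))) - c * (-1 / (2 * √(t₀ - x)))) x :=
      ((((hasDerivAt_id' x).const_sub t₀).log hx0.ne').const_mul ε).neg.sub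
        ((hasDerivAt_sqrt_const_sub (by linarith : x < t₀)).const_mul c)
    exact h.congr_deriv (by ring)
  have hspeed : ∀ s > 0, (2 * s ^ 2)⁻¹ * (ε + c * s + ε) = ε / s ^ 2 + c * (1 / (2 * s)) := by
    intro s hs; field_simp; ring
  have h := norm_sub_le_sub_of_norm_deriv_le hT₀ hX.hasDerivAt hB fun x hx => ?_
  · convert h using 1
    simp only [sub_zero]
    ring
  have hx0 : 0 < t₀ - x := by linarith [hx.2]
  calc _ ≤ (2 * (t₀ - x))⁻¹ * (infDist (X x) M + ε) := hX.norm_deriv_le hT (Ico_subset_Icc_self hx)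
    _ ≤ (2 * (t₀ - x))⁻¹ * (ε + c * √(t₀ - x) + ε) := by
        gcongr
        exact hX.infDist_le hT hε x (Ico_subset_Icc_self hx)
    _ = (2 * √(t₀ - x) ^ 2)⁻¹ * (ε + c * √(t₀ - x) + ε) := by rw [Real.sq_sqrt hx0.le]
    _ = ε / √(t₀ - x) ^ 2 + c * (1 / (2 * √(t₀ - x))) := hspeed _ (Real.sqrt_pos.2 hx0)
    _ = ε / (t₀ - x) + c * (1 / (2 * √(t₀ - x))) := by rw [Real.sq_sqrt hx0.le]

end IsLearnedScoreFlow

end Flow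

theorem terminal_path_length_general {D : ℕ}
    (M : Set (EuclideanSpace ℝ (Fin D)))
    (t₀ τ ε : ℝ) (hτ : τ ∈ Ioo (0 : ℝ) t₀) (hε : 0 ≤ ε)
    (X : ℝ → EuclideanSpace ℝ (Fin D))
    (π : EuclideanSpace ℝ (Fin D) → EuclideanSpace ℝ (Fin D))
    (hπ : ∀ t ∈ Icc (0 : ℝ) (t₀ - τ),
      π (X t) ∈ M ∧ ‖X t - π (X t)‖ = infDist (X t) M)
    (e : ℝ → EuclideanSpace ℝ (Fin D))
    (he : ∀ t ∈ Icc (0 : ℝ) (t₀ - τ), ‖e t‖ ≤ ε)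
    (hflow : ∀ t ∈ Icc (0 : ℝ) (t₀ - τ),
      HasDerivAt X ((2 * (t₀ - t))⁻¹ • (-(X t - π (X t)) + e t)) t) :
    ‖X (t₀ - τ) - X 0‖ ≤
      infDist (X 0) M + ((1 + Real.sqrt 2) / 2) * ε * Real.log (t₀ / τ) := by
  obtain ⟨hτ0, hτt₀⟩ := hτ
  have hdisp := (IsLearnedScoreFlow.mk hπ he hflow).norm_sub_le (by linarith) (by linarith) hε
  rw [sub_sub_cancel, ← Real.log_div (by linarith) hτ0.ne'] at hdisp
  set d₀ := infDist (X 0) M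
  have hlog : 0 ≤ Real.log (t₀ / τ) := Real.log_nonneg ((one_le_div hτ0).2 hτt₀.le)
  have hsqrt : d₀ / √t₀ * (√t₀ - √τ) ≤ d₀ := by
    rw [div_mul_eq_mul_div, div_le_iff₀ (Real.sqrt_pos.2 (by linarith))]
    nlinarith [infDist_nonneg (x := X 0) (s := M), Real.sqrt_nonneg τ]
  have hcoef : ε * Real.log (t₀ / τ) ≤ (1 + √2) / 2 * ε * Real.log (t₀ / τ) := by
    nlinarith [Real.one_lt_sqrt_two, mul_nonneg hε hlog]
  linarith

/-- Terminal-time path-length bound: the total displacement of the trajectory of the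
terminal-time probability-flow ODE is bounded by the initial distance to `M` plus a
logarithmic error term. -/
theorem terminal_path_length {D : ℕ}
    (M : Set (EuclideanSpace ℝ (Fin D))) (hM : M.Nonempty) (hMcl : IsClosed M)
    (t₀ τ ε : ℝ) (ht₀ : 0 < t₀) (hτ : τ ∈ Ioo (0 : ℝ) t₀) (hε : 0 ≤ ε)
    (X : ℝ → EuclideanSpace ℝ (Fin D))
    (π : EuclideanSpace ℝ (Fin D) → EuclideanSpace ℝ (Fin D))
    (hπ : ∀ t ∈ Icc (0 : ℝ) (t₀ - τ),
      π (X t) ∈ M ∧ ‖X t - π (X t)‖ = infDist (X t) M)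
    (e : ℝ → EuclideanSpace ℝ (Fin D))
    (he : ∀ t ∈ Icc (0 : ℝ) (t₀ - τ), ‖e t‖ ≤ ε)
    (hflow : ∀ t ∈ Icc (0 : ℝ) (t₀ - τ),
      HasDerivAt X ((2 * (t₀ - t))⁻¹ • (-(X t - π (X t)) + e t)) t)
    (hinit : Real.sqrt 2 * ε ≤ infDist (X 0) M) :
    ‖X (t₀ - τ) - X 0‖ ≤
      infDist (X 0) M + ((1 + Real.sqrt 2) / 2) * ε * Real.log (t₀ / τ) :=
  terminal_path_length_general M t₀ τ ε hτ hε X π hπ e he hflow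
end
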